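/- For positive integers a, b, d (sufficiently large for convergence), ζ_{sl(4)}(a,b,1,d,0,1) = ∑_{i=1}^{a} C(a+b−i−1, b−1) ζ_{sl(4)}(i,0,1,a+b+d−i,0,1) + ∑_{i=1}^{b} C(a+b−i−1, a−1) ζ_{sl(4)}(0,i,1,a+b+d−i,0,1). -/

import Mathlib

/-!
Put `x = n₁ + 1`, `y = n₂ + 1`, so that `n₁ + n₂ + 2 = x + y`. The summand of the left-hand side
is `1 / (x^a y^b)` times a factor that does not involve `a, b`, and the identity
`(x + y) / (x^(m+1) y^(n+1)) = 1 / (x^m y^(n+1)) + 1 / (x^(m+1) y^n)` yields, by induction on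
`(m, n)` and Pascal's rule, the partial-fraction expansion of `1 / (x^a y^b)` in powers of `1/x`,
`1/y` and `1/(x + y)`. Summing this over `(n₁, n₂, n₃)` gives the theorem: all series involved are
dominated by `∏ 1 / (nᵢ + 1)^2`, so the triple sum may be taken over `ℕ × ℕ × ℕ` and commuted
with the finite sums.
-/

noncomputable def wittenSl4 (a b c d e f : ℕ) : ℝ :=
  ∑' (n₁ : ℕ) (n₂ : ℕ) (n₃ : ℕ),
    1 / ((n₁ + 1 : ℝ) ^ a * (n₂ + 1 : ℝ) ^ b * (n₃ + 1 : ℝ) ^ c *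
      (n₁ + n₂ + 2 : ℝ) ^ d * (n₂ + n₃ + 2 : ℝ) ^ e * (n₁ + n₂ + n₃ + 3 : ℝ) ^ f)

open Finset

section PartialFractions

variable {K : Type*} [Field K]

/-- The `1/x`-part of the partial-fraction expansion of `1 / (x^(m+1) y^(n+1))`, where `s`
stands for `x + y`. -/
noncomputable def partialFractionSum (x s : K) (m n : ℕ) : K :=
  ∑ j ∈ range (m + 1), ((m + n - j).choose n : K) / (x ^ (j + 1) * s ^ (m + n + 1 - j))

variable {x y s : K}

lemma partialFractionSum_zero_zero : partialFractionSum x s 0 0 = 1 / (x * s) := by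
  simp [partialFractionSum]

lemma partialFractionSum_zero_succ (n : ℕ) :
    partialFractionSum x s 0 (n + 1) = partialFractionSum x s 0 n / s := by
  simp [partialFractionSum, pow_succ]
  ring

lemma partialFractionSum_succ_zero (m : ℕ) :
    partialFractionSum x s (m + 1) 0 =
      partialFractionSum x s m 0 / s + 1 / (x ^ (m + 2) * s) := by
  simp only [partialFractionSum, Nat.choose_zero_right, Nat.cast_one, sum_div]
  rw [sum_range_succ, add_zero, show m + 1 + 1 - (m + 1) = 1 by omega, pow_one]
  congr 1
  refine sum_congr rfl fun j _ => ?_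
  rw [add_zero, show m + 1 + 1 - j = (m + 1 - j) + 1 by grind, pow_succ]
  ring

lemma partialFractionSum_succ_succ (m n : ℕ) :
    partialFractionSum x s (m + 1) (n + 1) =
      (partialFractionSum x s m (n + 1) + partialFractionSum x s (m + 1) n) / s := by
  have hext : partialFractionSum x s m (n + 1) = ∑ j ∈ range (m + 2),
      ((m + (n + 1) - j).choose (n + 1) : K) / (x ^ (j + 1) * s ^ (m + (n + 1) + 1 - j)) := by
    rw [sum_range_succ, Nat.choose_eq_zero_of_lt (by omega), Nat.cast_zero, zero_div, add_zero]
    rfl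
  rw [hext, partialFractionSum, partialFractionSum, ← sum_add_distrib, sum_div]
  refine sum_congr rfl fun j hj => ?_
  replace hj : j ≤ m + 1 := Nat.lt_succ_iff.mp (mem_range.mp hj)
  rw [show m + 1 + (n + 1) - j = (m + n + 1 - j) + 1 by omega, Nat.choose_succ_succ',
    show m + 1 + (n + 1) + 1 - j = (m + n + 2 - j) + 1 by omega, pow_succ,
    show m + (n + 1) - j = m + n + 1 - j by omega,
    show m + (n + 1) + 1 - j = m + n + 2 - j by omega,
    show m + 1 + n - j = m + n + 1 - j by omega, show m + 1 + n + 1 - j = m + n + 2 - j by omega]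
  push_cast
  ring

theorem one_div_pow_succ_mul_pow_succ (hx : x ≠ 0) (hy : y ≠ 0) (hxy : x + y ≠ 0) (m n : ℕ) :
    1 / (x ^ (m + 1) * y ^ (n + 1)) =
      partialFractionSum x (x + y) m n + partialFractionSum y (x + y) n m := by
  induction m generalizing n with
  | zero =>
    induction n with
    | zero =>
      rw [partialFractionSum_zero_zero, partialFractionSum_zero_zero]
      field_simp
      ring
    | succ n ih =>
      rw [partialFractionSum_zero_succ, partialFractionSum_succ_zero, ← add_assoc, ← add_div,
        ← ih]
      field_simp
      ring
  | succ m ihm =>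
    induction n with
    | zero =>
      rw [partialFractionSum_zero_succ, partialFractionSum_succ_zero,
        add_right_comm (partialFractionSum x _ m 0 / _), ← add_div, ← ihm]
      field_simp
      ring
    | succ n ihn =>
      rw [partialFractionSum_succ_succ, partialFractionSum_succ_succ, ← add_div,
        add_comm (partialFractionSum y _ n _), add_add_add_comm, ← ihm, ← ihn]
      field_simp
      ring

theorem one_div_pow_mul_pow_eq_sum (hx : x ≠ 0) (hy : y ≠ 0) (hxy : x + y ≠ 0) {a b : ℕ}
    (ha : a ≠ 0) (hb : b ≠ 0) :
    1 / (x ^ a * y ^ b) =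
      ∑ i ∈ Icc 1 a, ((a + b - i - 1).choose (b - 1) : K) / (x ^ i * (x + y) ^ (a + b - i)) +
      ∑ i ∈ Icc 1 b, ((a + b - i - 1).choose (a - 1) : K) / (y ^ i * (x + y) ^ (a + b - i)) := by
  obtain ⟨m, rfl⟩ := Nat.exists_eq_succ_of_ne_zero ha
  obtain ⟨n, rfl⟩ := Nat.exists_eq_succ_of_ne_zero hb
  rw [one_div_pow_succ_mul_pow_succ hx hy hxy, partialFractionSum, partialFractionSum]
  congr 1 <;>
  · rw [← Ico_add_one_right_eq_Icc, sum_Ico_eq_sum_range, add_tsub_cancel_right]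
    refine sum_congr rfl fun j _ => ?_
    congr 3 <;> omega

end PartialFractions

noncomputable def wittenSl4Term (a b c d e f : ℕ) (n : ℕ × ℕ × ℕ) : ℝ :=
  1 / ((n.1 + 1 : ℝ) ^ a * (n.2.1 + 1 : ℝ) ^ b * (n.2.2 + 1 : ℝ) ^ c *
    (n.1 + n.2.1 + 2 : ℝ) ^ d * (n.2.1 + n.2.2 + 2 : ℝ) ^ e * (n.1 + n.2.1 + n.2.2 + 3 : ℝ) ^ f)

lemma wittenSl4_eq_tsum_wittenSl4Term {a b c d e f : ℕ}
    (h : Summable (wittenSl4Term a b c d e f)) :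
    wittenSl4 a b c d e f = ∑' n, wittenSl4Term a b c d e f n := by
  rw [wittenSl4, h.tsum_prod' h.prod_factor]
  exact tsum_congr fun n₁ => ((h.prod_factor n₁).tsum_prod' (h.prod_factor n₁).prod_factor).symm

lemma sq_le_pow_mul_pow {X S : ℝ} (hX : 1 ≤ X) (hXS : X ≤ S) {a k : ℕ} (h : 2 ≤ a + k) :
    X ^ 2 ≤ X ^ a * S ^ k :=
  calc X ^ 2 ≤ X ^ (a + k) := pow_le_pow_right₀ hX h
    _ = X ^ a * X ^ k := pow_add X a k
    _ ≤ X ^ a * S ^ k := by gcongr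

lemma summable_one_div_nat_add_one_sq : Summable fun n : ℕ => 1 / ((n : ℝ) + 1) ^ 2 := by
  exact_mod_cast (summable_nat_add_iff 1).2 (Real.summable_one_div_nat_pow.2 one_lt_two)

lemma summable_wittenSl4Term {a b d d₁ d₂ : ℕ} (h₁ : 2 ≤ a + d₁) (h₂ : 2 ≤ b + d₂)
    (hd : d₁ + d₂ ≤ d) : Summable (wittenSl4Term a b 1 d 0 1) := by
  set g : ℕ → ℝ := fun n => 1 / ((n : ℝ) + 1) ^ 2
  have hg0 : 0 ≤ g := fun n => by positivity
  have hg := summable_one_div_nat_add_one_sq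
  have hprod : Summable fun n : ℕ × ℕ × ℕ => g n.1 * (g n.2.1 * g n.2.2) :=
    hg.mul_of_nonneg (hg.mul_of_nonneg hg hg0 hg0) hg0 fun _ => by positivity
  refine hprod.of_nonneg_of_le (fun n => by unfold wittenSl4Term; positivity) fun n => ?_
  obtain ⟨n₁, n₂, n₃⟩ := n
  set X : ℝ := n₁ + 1
  set Y : ℝ := n₂ + 1
  set Z : ℝ := n₃ + 1
  have hX : 1 ≤ X := by simp [X]
  have hY : 1 ≤ Y := by simp [Y]
  have hS : (n₁ + n₂ + 2 : ℝ) = X + Y := by ring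
  have hW : (n₁ + n₂ + n₃ + 3 : ℝ) = X + Y + Z := by ring
  simp only [wittenSl4Term, g, hS, hW, pow_zero, pow_one, mul_one, one_div_mul_one_div]
  apply one_div_le_one_div_of_le (by positivity)
  calc X ^ 2 * (Y ^ 2 * Z ^ 2)
      ≤ (X ^ a * (X + Y) ^ d₁) * (Y ^ b * (X + Y) ^ d₂) * (Z * (X + Y + Z)) := by
        rw [mul_assoc]
        gcongr
        · exact sq_le_pow_mul_pow hX (by linarith) h₁
        · exact sq_le_pow_mul_pow hY (by linarith) h₂
        · rw [sq]; gcongr; linarith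
    _ = X ^ a * Y ^ b * Z * (X + Y) ^ (d₁ + d₂) * (X + Y + Z) := by ring
    _ ≤ X ^ a * Y ^ b * Z * (X + Y) ^ d * (X + Y + Z) := by
        gcongr
        linarith

lemma wittenSl4Term_add (a b k d : ℕ) (n : ℕ × ℕ × ℕ) :
    wittenSl4Term a b 1 (k + d) 0 1 n =
      1 / ((n.1 + 1 : ℝ) ^ a * (n.2.1 + 1 : ℝ) ^ b * (n.1 + n.2.1 + 2 : ℝ) ^ k) *
        wittenSl4Term 0 0 1 d 0 1 n := by
  simp only [wittenSl4Term, pow_add, one_div_mul_one_div, pow_zero, pow_one, mul_one]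
  congr 1
  ring

lemma wittenSl4Term_eq_sum {a b : ℕ} (ha : a ≠ 0) (hb : b ≠ 0) (d : ℕ) (n : ℕ × ℕ × ℕ) :
    wittenSl4Term a b 1 d 0 1 n =
      ∑ i ∈ Icc 1 a, ((a + b - i - 1).choose (b - 1) : ℝ) *
        wittenSl4Term i 0 1 (a + b + d - i) 0 1 n +
      ∑ i ∈ Icc 1 b, ((a + b - i - 1).choose (a - 1) : ℝ) *
        wittenSl4Term 0 i 1 (a + b + d - i) 0 1 n := by
  have key := one_div_pow_mul_pow_eq_sum (x := (n.1 + 1 : ℝ)) (y := n.2.1 + 1)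
    (by positivity) (by positivity) (by positivity) ha hb
  rw [show (n.1 + 1 : ℝ) + (n.2.1 + 1) = n.1 + n.2.1 + 2 by ring] at key
  rw [← zero_add d, wittenSl4Term_add, pow_zero, mul_one, key, add_mul, sum_mul, sum_mul]
  congr 1 <;> refine sum_congr rfl fun i hi => ?_ <;>
  · rw [show a + b + (0 + d) - i = (a + b - i) + d by grind, wittenSl4Term_add]
    ring

lemma tsum_sum_mul_left {ι α : Type*} {s : Finset ι} (c : ι → ℝ) {f : ι → α → ℝ}
    (hf : ∀ i ∈ s, Summable (f i)) :
    ∑' n, ∑ i ∈ s, c i * f i n = ∑ i ∈ s, c i * ∑' n, f i n := by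
  rw [Summable.tsum_finsetSum fun i hi => (hf i hi).mul_left (c i)]
  exact sum_congr rfl fun i _ => tsum_mul_left

theorem wittenSl4_ab1d01 (a b d : ℕ) (ha : 2 ≤ a) (hb : 2 ≤ b) (hd : 2 ≤ d) :
    wittenSl4 a b 1 d 0 1 =
      (∑ i ∈ Finset.Icc 1 a, (Nat.choose (a + b - i - 1) (b - 1) : ℝ) *
        wittenSl4 i 0 1 (a + b + d - i) 0 1) +
      (∑ i ∈ Finset.Icc 1 b, (Nat.choose (a + b - i - 1) (a - 1) : ℝ) *
        wittenSl4 0 i 1 (a + b + d - i) 0 1) := by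
  have hmain : Summable (wittenSl4Term a b 1 d 0 1) :=
    summable_wittenSl4Term (d₁ := 0) (d₂ := 0) ha hb (Nat.zero_le d)
  have hleft : ∀ i ∈ Icc 1 a, Summable (wittenSl4Term i 0 1 (a + b + d - i) 0 1) :=
    fun i hi => summable_wittenSl4Term (d₁ := 2) (d₂ := 2) (by omega) le_rfl (by grind)
  have hright : ∀ i ∈ Icc 1 b, Summable (wittenSl4Term 0 i 1 (a + b + d - i) 0 1) :=
    fun i hi => summable_wittenSl4Term (d₁ := 2) (d₂ := 2) le_rfl (by omega) (by grind)
  rw [wittenSl4_eq_tsum_wittenSl4Term hmain,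
    tsum_congr (wittenSl4Term_eq_sum (by omega) (by omega) d),
    Summable.tsum_add (summable_sum fun i hi => (hleft i hi).mul_left _)
      (summable_sum fun i hi => (hright i hi).mul_left _),
    tsum_sum_mul_left _ hleft, tsum_sum_mul_left _ hright]
  congr 1 <;> refine sum_congr rfl fun i hi => ?_
  · rw [wittenSl4_eq_tsum_wittenSl4Term (hleft i hi)]
  · rw [wittenSl4_eq_tsum_wittenSl4Term (hright i hi)]
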